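/- (Zlotnik's inequality.) Let the function y satisfy y'(t) ≤ g(y(t)) + b'(t) on [0,T] with y(0) = y⁰, where g ∈ C(ℝ), y, b ∈ W^{1,1}(0,T), and g(ξ) → −∞ as ξ → ∞. If b(t₂) − b(t₁) ≤ N₀ + N₁(t₂ − t₁) for all 0 ≤ t₁ < t₂ ≤ T with some constants N₀ ≥ 0 and N₁ ≥ 0, and ξ* is a constant such that g(ξ) ≤ −N₁ for all ξ ≥ ξ*, then y(t) ≤ max{y⁰, ξ*} + N₀ < ∞ on [0,T]. -/

import Mathlib

/- Zlotnik's inequality. -/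

open MeasureTheory Real Set Filter
open scoped Topology

/-- Zlotnik's inequality: if `y' ≤ g(y) + b'` a.e. on `[0,T]` with `y, b`
absolutely continuous (written via the fundamental theorem of calculus with
integrable derivatives `y'`, `b'`), `g` continuous with `g(∞) = -∞`,
`b(t₂) - b(t₁) ≤ N₀ + N₁ (t₂ - t₁)`, and `g(ξ) ≤ -N₁` for all `ξ ≥ ξ*`,
then `y(t) ≤ max {y(0), ξ*} + N₀` on `[0,T]`. -/
theorem zlotnik_inequality (T : ℝ) (hT : 0 < T)
    (g : ℝ → ℝ) (y b y' b' : ℝ → ℝ)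
    (hg : Continuous g) (hgtop : Tendsto g atTop atBot)
    (hy'int : IntervalIntegrable y' volume 0 T)
    (hb'int : IntervalIntegrable b' volume 0 T)
    (hyFTC : ∀ t ∈ Icc (0:ℝ) T, y t = y 0 + ∫ s in (0:ℝ)..t, y' s)
    (hbFTC : ∀ t ∈ Icc (0:ℝ) T, b t = b 0 + ∫ s in (0:ℝ)..t, b' s)
    (hineq : ∀ᵐ t ∂(volume.restrict (Icc (0:ℝ) T)), y' t ≤ g (y t) + b' t)
    (N₀ N₁ : ℝ) (hN₀ : 0 ≤ N₀) (hN₁ : 0 ≤ N₁)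
    (hb : ∀ t₁ t₂ : ℝ, 0 ≤ t₁ → t₁ < t₂ → t₂ ≤ T → b t₂ - b t₁ ≤ N₀ + N₁ * (t₂ - t₁))
    (ξs : ℝ) (hξ : ∀ ξ : ℝ, ξs ≤ ξ → g ξ ≤ -N₁) :
    ∀ t ∈ Icc (0:ℝ) T, y t ≤ max (y 0) ξs + N₀ := by
  intro t ht
  by_contra hcon
  push_neg at hcon
  set M := max (y 0) ξs with hM
  -- continuity of y on [0, T]
  have hyc : ContinuousOn y (Icc 0 T) := by
    have h1 : ContinuousOn (fun u => y 0 + ∫ s in (0:ℝ)..u, y' s) (Icc 0 T) := by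
      apply continuousOn_const.add
      have := intervalIntegral.continuousOn_primitive_interval'
        (a := (0:ℝ)) hy'int (left_mem_uIcc (a := (0:ℝ)) (b := T))
      rwa [uIcc_of_le hT.le] at this
    exact h1.congr hyFTC
  -- the set where y ≤ M up to time t
  set S : Set ℝ := Icc 0 t ∩ y ⁻¹' Iic M with hS
  have hsubT : Icc (0:ℝ) t ⊆ Icc 0 T := Icc_subset_Icc le_rfl ht.2
  have hSclosed : IsClosed S :=
    (hyc.mono hsubT).preimage_isClosed_of_isClosed isClosed_Icc isClosed_Iic
  have hScompact : IsCompact S :=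
    isCompact_Icc.of_isClosed_subset hSclosed inter_subset_left
  have h0S : (0:ℝ) ∈ S := ⟨⟨le_rfl, ht.1⟩, mem_preimage.mpr (mem_Iic.mpr (le_max_left _ _))⟩
  set t₁ := sSup S with ht₁
  have ht₁S : t₁ ∈ S := hScompact.sSup_mem ⟨0, h0S⟩
  have ht₁Icc : t₁ ∈ Icc 0 t := ht₁S.1
  have hyt₁ : y t₁ ≤ M := ht₁S.2
  have hytM : M < y t := lt_of_le_of_lt (le_add_of_nonneg_right hN₀) hcon
  have ht₁lt : t₁ < t := by
    rcases lt_or_eq_of_le ht₁Icc.2 with h | h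
    · exact h
    · exact absurd (h ▸ hyt₁) (not_le.mpr hytM)
  -- for s in (t₁, t], y s > M
  have hIoc : ∀ s ∈ Ioc t₁ t, M < y s := by
    intro s hs
    by_contra hle
    push_neg at hle
    have hsS : s ∈ S := ⟨⟨le_trans ht₁Icc.1 hs.1.le, hs.2⟩, hle⟩
    exact absurd (le_csSup hScompact.bddAbove hsS) (not_le.mpr hs.1)
  have hsub12 : Icc t₁ t ⊆ Icc 0 T := Icc_subset_Icc ht₁Icc.1 ht.2
  have hsubu : uIcc t₁ t ⊆ uIcc 0 T := by
    rw [uIcc_of_le ht₁lt.le, uIcc_of_le hT.le]; exact hsub12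
  -- integrability
  have hy'12 : IntervalIntegrable y' volume t₁ t := hy'int.mono_set hsubu
  have hb'12 : IntervalIntegrable b' volume t₁ t := hb'int.mono_set hsubu
  have hgy12 : IntervalIntegrable (fun s => g (y s)) volume t₁ t := by
    apply ContinuousOn.intervalIntegrable
    rw [uIcc_of_le ht₁lt.le]
    exact hg.comp_continuousOn (hyc.mono hsub12)
  -- FTC differences
  have hyd : y t - y t₁ = ∫ s in t₁..t, y' s := by
    rw [hyFTC t ht, hyFTC t₁ (hsubT ht₁Icc)]
    have := intervalIntegral.integral_interval_sub_left
      (hy'int.mono_set (by rw [uIcc_of_le ht.1, uIcc_of_le hT.le]; exact Icc_subset_Icc le_rfl ht.2))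
      (hy'int.mono_set (by
        rw [uIcc_of_le ht₁Icc.1, uIcc_of_le hT.le]
        exact Icc_subset_Icc le_rfl (le_trans ht₁Icc.2 ht.2)))
    linarith [this]
  have hbd : b t - b t₁ = ∫ s in t₁..t, b' s := by
    rw [hbFTC t ht, hbFTC t₁ (hsubT ht₁Icc)]
    have := intervalIntegral.integral_interval_sub_left
      (hb'int.mono_set (by rw [uIcc_of_le ht.1, uIcc_of_le hT.le]; exact Icc_subset_Icc le_rfl ht.2))
      (hb'int.mono_set (by
        rw [uIcc_of_le ht₁Icc.1, uIcc_of_le hT.le]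
        exact Icc_subset_Icc le_rfl (le_trans ht₁Icc.2 ht.2)))
    linarith [this]
  -- a.e. inequality on [t₁, t]
  have hineq12 : ∀ᵐ s ∂(volume.restrict (Icc t₁ t)), y' s ≤ g (y s) + b' s :=
    hineq.filter_mono (ae_mono (Measure.restrict_mono hsub12 le_rfl))
  have hstep1 : (∫ s in t₁..t, y' s) ≤ ∫ s in t₁..t, (g (y s) + b' s) :=
    intervalIntegral.integral_mono_ae_restrict ht₁lt.le hy'12 (hgy12.add hb'12) hineq12
  -- bound ∫ g(y)
  have hgbound : (∫ s in t₁..t, g (y s)) ≤ ∫ s in t₁..t, (-N₁ : ℝ) := by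
    apply intervalIntegral.integral_mono_ae_restrict ht₁lt.le hgy12
      (intervalIntegrable_const)
    have hmem : ∀ᵐ s ∂(volume.restrict (Icc t₁ t)), s ∈ Ioc t₁ t := by
      rw [← Measure.restrict_congr_set Ioc_ae_eq_Icc]
      exact ae_restrict_mem measurableSet_Ioc
    filter_upwards [hmem] with s hs
    exact hξ (y s) (le_trans (le_max_right _ _) (hIoc s hs).le)
  have hconst : (∫ s in t₁..t, (-N₁ : ℝ)) = (t - t₁) * (-N₁) := by
    simp [smul_eq_mul]
  have hbineq : b t - b t₁ ≤ N₀ + N₁ * (t - t₁) := hb t₁ t ht₁Icc.1 ht₁lt ht.2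
  have hsplit : (∫ s in t₁..t, (g (y s) + b' s)) =
      (∫ s in t₁..t, g (y s)) + ∫ s in t₁..t, b' s :=
    intervalIntegral.integral_add hgy12 hb'12
  have hyt₁M : y t₁ ≤ M := hyt₁
  have : y t ≤ M + N₀ := by
    have h1 : y t - y t₁ ≤ (t - t₁) * (-N₁) + (b t - b t₁) := by
      rw [hyd, hbd]
      calc (∫ s in t₁..t, y' s) ≤ ∫ s in t₁..t, (g (y s) + b' s) := hstep1
        _ = (∫ s in t₁..t, g (y s)) + ∫ s in t₁..t, b' s := hsplit
        _ ≤ (t - t₁) * (-N₁) + ∫ s in t₁..t, b' s := by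
            rw [← hconst]; exact add_le_add_left hgbound _
    nlinarith [h1, hbineq, hyt₁M]
  exact absurd this (not_le.mpr hcon)
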